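/- arXiv:1310.0192 — 3 statements merged into one kernel-verified Lean document; each statement's English description precedes it below -/
import Mathlib

section
/- For any continuous function y: [0,∞) → [0,∞) and any initial condition ā ∈ [0,∞)^{K+1}, the ODE x'(t) = F(y(t), x(t)), x(0) = ā, where F is defined by F_0(y,x) = F_{K+1}(y,x) = x_K, F_2(y,x) = y + (γ₂ - x₀)x₂, and F_k(y,x) = x_{k-1} + (γ_k - x₀)x_k for k = 3,…,K, has a unique solution defined on all of [0,∞). -/
/-! The vector field is polynomial, hence Lipschitz on bounded sets, so solutions are unique.
Since `F_k ≥ 0` at nonnegative states with `x_k = 0`, the orthant `x ≥ 0` is invariant, and on it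
`∑ F_k ≤ C (y + ∑ x_k)`; Grönwall's inequality therefore bounds every solution on `[0, T]` a
priori. Truncating the field at that bound gives a globally Lipschitz problem, which
Picard–Lindelöf solves on `[0, T]`; its solution never reaches the truncation, and the solutions
for `T = 1, 2, …` agree and glue to one on `[0, ∞)`. -/

open Set Filter

/-- `IsSol K γ y a x` says that `x = (x₀, x₂, …, x_{K+1})` solves the ODE
`x'(t) = F(y(t), x(t))` on `[0,∞)` with initial condition `a`, where the
components are indexed by `{0, 2, …, K+1}`, `F₀ = F_{K+1} = x_K`,
`F₂ = y + (γ₂ - x₀)x₂` and `F_k = x_{k-1} + (γ_k - x₀)x_k` for `3 ≤ k ≤ K`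
(with the convention `x₁ := y`, so that `F₂` fits the same pattern, and
`x_K` is interpreted as `y` when `K = 1`). -/
def IsSol (K : ℕ) (γ : ℕ → ℝ) (y : ℝ → ℝ) (a : ℕ → ℝ) (x : ℕ → ℝ → ℝ) : Prop :=
  (∀ k, x k 0 = a k) ∧
  (∀ t ∈ Ici (0:ℝ),
    HasDerivWithinAt (x 0) (if K = 1 then y t else x K t) (Ici 0) t) ∧
  (∀ t ∈ Ici (0:ℝ),
    HasDerivWithinAt (x (K+1)) (if K = 1 then y t else x K t) (Ici 0) t) ∧
  (∀ k, 2 ≤ k → k ≤ K → ∀ t ∈ Ici (0:ℝ),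
    HasDerivWithinAt (x k)
      ((if k = 2 then y t else x (k-1) t) + (γ k - x 0 t) * x k t) (Ici 0) t)

open Metric Topology NNReal

section ODE

variable {E : Type*} [NormedAddCommGroup E] [NormedSpace ℝ E]

theorem nonneg_of_hasDerivAt_nonneg_of_neg {u u' : ℝ → ℝ} {a b : ℝ}
    (hu : ContinuousOn u (Icc a b)) (hu' : ∀ t ∈ Ioo a b, HasDerivAt u (u' t) t)
    (ha : 0 ≤ u a) (hneg : ∀ t ∈ Ioo a b, u t < 0 → 0 ≤ u' t) :
    ∀ t ∈ Icc a b, 0 ≤ u t := by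
  intro t₁ ht₁
  by_contra! hlt
  have hS : IsCompact (Icc a t₁ ∩ u ⁻¹' Ici 0) :=
    isCompact_Icc.of_isClosed_subset ((hu.mono (Icc_subset_Icc_right ht₁.2))
      |>.preimage_isClosed_of_isClosed isClosed_Icc isClosed_Ici) inter_subset_left
  -- the last time before `t₁` at which `u` is nonnegative
  obtain ⟨t₀, ⟨ht₀, hut₀ : 0 ≤ u t₀⟩, hmax⟩ := hS.exists_isGreatest ⟨a, ⟨le_rfl, ht₁.1⟩, ha⟩
  have hneg' : ∀ s ∈ Ioc t₀ t₁, u s < 0 := fun s hs => by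
    by_contra! h
    exact (hmax ⟨⟨ht₀.1.trans hs.1.le, hs.2⟩, h⟩).not_gt hs.1
  have hsub : Ioo t₀ t₁ ⊆ Ioo a b := Ioo_subset_Ioo ht₀.1 ht₁.2
  have hmono : MonotoneOn u (Icc t₀ t₁) := by
    refine monotoneOn_of_hasDerivWithinAt_nonneg (f' := u') (convex_Icc _ _)
      (hu.mono (Icc_subset_Icc ht₀.1 ht₁.2)) (fun s hs => ?_) (fun s hs => ?_) <;>
      rw [interior_Icc] at hs
    · exact (hu' s (hsub hs)).hasDerivWithinAt
    · exact hneg s (hsub hs) (hneg' s ⟨hs.1, hs.2.le⟩)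
  linarith [hmono ⟨le_rfl, ht₀.2⟩ ⟨ht₀.2, le_rfl⟩ ht₀.2]

theorem eqOn_Icc_of_lipschitzOnWith_closedBall {f : ℝ → E → E} {a b : ℝ}
    (hf : ∀ R, ∃ L, ∀ t ∈ Ico a b, LipschitzOnWith L (f t) (closedBall 0 R))
    {u w : ℝ → E} (hu : ContinuousOn u (Icc a b))
    (hu' : ∀ t ∈ Ico a b, HasDerivWithinAt u (f t (u t)) (Ici t) t)
    (hw : ContinuousOn w (Icc a b))
    (hw' : ∀ t ∈ Ico a b, HasDerivWithinAt w (f t (w t)) (Ici t) t)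
    (ha : u a = w a) : EqOn u w (Icc a b) := by
  obtain ⟨Ru, hRu⟩ := isCompact_Icc.exists_bound_of_continuousOn hu
  obtain ⟨Rw, hRw⟩ := isCompact_Icc.exists_bound_of_continuousOn hw
  obtain ⟨L, hL⟩ := hf (max Ru Rw)
  refine ODE_solution_unique_of_mem_Icc_right (s := fun _ => closedBall 0 (max Ru Rw)) hL
    hu hu' (fun t ht => ?_) hw hw' (fun t ht => ?_) ha <;> rw [mem_closedBall_zero_iff]
  · exact (hRu t (Ico_subset_Icc_self ht)).trans (le_max_left _ _)
  · exact (hRw t (Ico_subset_Icc_self ht)).trans (le_max_right _ _)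

theorem eqOn_Ici_of_lipschitzOnWith_closedBall {f : ℝ → E → E}
    (hf : ∀ T R, ∃ L, ∀ t ∈ Ico 0 T, LipschitzOnWith L (f t) (closedBall 0 R))
    {u w : ℝ → E} (hu : ∀ t ∈ Ici 0, HasDerivWithinAt u (f t (u t)) (Ici 0) t)
    (hw : ∀ t ∈ Ici 0, HasDerivWithinAt w (f t (w t)) (Ici 0) t)
    (h0 : u 0 = w 0) : EqOn u w (Ici 0) := fun T hT =>
  eqOn_Icc_of_lipschitzOnWith_closedBall (hf T)
    (fun t ht => (hu t ht.1).continuousWithinAt.mono Icc_subset_Ici_self)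
    (fun t ht => (hu t ht.1).mono (Ici_subset_Ici.2 ht.1))
    (fun t ht => (hw t ht.1).continuousWithinAt.mono Icc_subset_Ici_self)
    (fun t ht => (hw t ht.1).mono (Ici_subset_Ici.2 ht.1)) h0 ⟨hT, le_rfl⟩

theorem exists_forall_Ici_hasDerivWithinAt {f : ℝ → E → E} {x₀ : E}
    (hf : ∀ T R, ∃ L, ∀ t ∈ Ico 0 T, LipschitzOnWith L (f t) (closedBall 0 R))
    (hex : ∀ T, 0 ≤ T → ∃ u : ℝ → E,
      u 0 = x₀ ∧ ∀ t ∈ Icc 0 T, HasDerivWithinAt u (f t (u t)) (Icc 0 T) t) :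
    ∃ u : ℝ → E, u 0 = x₀ ∧ ∀ t ∈ Ici 0, HasDerivWithinAt u (f t (u t)) (Ici 0) t := by
  choose sol hsol0 hsol using fun n : ℕ => hex (n + 1) (by positivity)
  have hagree : ∀ m n : ℕ, m ≤ n → EqOn (sol m) (sol n) (Icc 0 (m + 1)) := by
    intro m n hmn
    have hmn' : (m : ℝ) + 1 ≤ n + 1 := by gcongr
    refine eqOn_Icc_of_lipschitzOnWith_closedBall (hf _)
      (fun t ht => (hsol m t ht).continuousWithinAt)
      (fun t ht => (hsol m t (Ico_subset_Icc_self ht)).mono_of_mem_nhdsWithin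
        (Icc_mem_nhdsGE_of_mem ht))
      (fun t ht => (hsol n t ⟨ht.1, ht.2.trans hmn'⟩).continuousWithinAt.mono
        (Icc_subset_Icc_right hmn'))
      (fun t ht => (hsol n t ⟨ht.1, ht.2.le.trans hmn'⟩).mono_of_mem_nhdsWithin
        (Icc_mem_nhdsGE_of_mem ⟨ht.1, ht.2.trans_le hmn'⟩)) (by rw [hsol0, hsol0])
  refine ⟨fun t => sol ⌊t⌋₊ t, by simp [hsol0], fun t ht => ?_⟩
  set n := ⌊t⌋₊
  have htn : t < n + 1 := Nat.lt_floor_add_one t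
  have heq : EqOn (fun s => sol ⌊s⌋₊ s) (sol n) (Icc 0 (n + 1)) := fun s hs => by
    rcases le_total ⌊s⌋₊ n with h | h
    · exact hagree _ _ h ⟨hs.1, (Nat.lt_floor_add_one s).le⟩
    · exact (hagree _ _ h hs).symm
  have hnhds : Icc 0 ((n : ℝ) + 1) ∈ 𝓝[Ici 0] t :=
    Ici_inter_Iic (a := (0 : ℝ)) ▸ inter_mem_nhdsWithin _ (Iic_mem_nhds htn)
  have ht' : t ∈ Icc 0 ((n : ℝ) + 1) := ⟨ht, htn.le⟩
  rw [heq ht']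
  exact ((hsol n t ht').mono_of_mem_nhdsWithin hnhds).congr_of_eventuallyEq
    (eventually_of_mem hnhds heq) (heq ht')

theorem exists_forall_Icc_hasDerivWithinAt_of_lipschitzWith [CompleteSpace E]
    {g : ℝ → E → E} {T : ℝ} (hT : 0 ≤ T) {L M : ℝ≥0}
    (hlip : ∀ t ∈ Icc 0 T, LipschitzWith L (g t))
    (hcont : ∀ x, ContinuousOn (g · x) (Icc 0 T))
    (hbdd : ∀ t ∈ Icc 0 T, ∀ x, ‖g t x‖ ≤ M) (x₀ : E) :
    ∃ u : ℝ → E, u 0 = x₀ ∧ ∀ t ∈ Icc 0 T, HasDerivWithinAt u (g t (u t)) (Icc 0 T) t :=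
  IsPicardLindelof.exists_eq_forall_mem_Icc_hasDerivWithinAt₀ (t₀ := ⟨0, le_rfl, hT⟩)
    (a := M * T.toNNReal)
    { lipschitzOnWith := fun t ht => (hlip t ht).lipschitzOnWith
      continuousOn := fun x _ => hcont x
      norm_le := fun t ht x _ => hbdd t ht x
      mul_max_le := by simp [hT] }

theorem exists_lipschitzOnWith_of_contDiff_uncurry {P F : Type*}
    [NormedAddCommGroup P] [NormedSpace ℝ P] [ProperSpace P] [ProperSpace E]
    [NormedAddCommGroup F] [NormedSpace ℝ F] {f : P → E → F}
    (hf : ContDiff ℝ 1 (Function.uncurry f)) (R : ℝ) :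
    ∃ L, ∀ p, ‖p‖ ≤ R → LipschitzOnWith L (f p) (closedBall 0 R) := by
  obtain ⟨L, hL⟩ := hf.contDiffOn.exists_lipschitzOnWith one_ne_zero (convex_closedBall 0 R)
    (isCompact_closedBall 0 R)
  refine ⟨L, fun p hp => ?_⟩
  simpa [Function.comp_def] using hL.comp (LipschitzWith.prodMk_left p).lipschitzOnWith fun x hx =>
    mem_closedBall_zero_iff.2 (by simpa [Prod.norm_def] using ⟨hp, mem_closedBall_zero_iff.1 hx⟩)

end ODE

section Clamp

variable {ι : Type*}

def clamp (B : ℝ) (v : ι → ℝ) : ι → ℝ := fun i => max 0 (min B (v i))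

theorem lipschitzWith_clamp [Fintype ι] (B : ℝ) : LipschitzWith 1 (clamp B : (ι → ℝ) → ι → ℝ) := by
  refine LipschitzWith.of_dist_le_mul fun v w => ?_
  rw [NNReal.coe_one, one_mul, dist_pi_le_iff dist_nonneg]
  exact fun i => (((LipschitzWith.id.const_min B).const_max 0).dist_le_mul (v i) (w i)).trans
    (by simpa using dist_le_pi_dist v w i)

theorem clamp_nonneg (B : ℝ) (v : ι → ℝ) : 0 ≤ clamp B v := fun _ => le_max_left _ _

theorem norm_clamp_le [Fintype ι] {B : ℝ} (hB : 0 ≤ B) (v : ι → ℝ) : ‖clamp B v‖ ≤ B :=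
  (pi_norm_le_iff_of_nonneg hB).2 fun i => by
    rw [Real.norm_of_nonneg (clamp_nonneg B v i)]
    exact max_le hB (min_le_left _ _)

theorem clamp_apply_eq_zero (B : ℝ) {v : ι → ℝ} {i : ι} (hi : v i ≤ 0) : clamp B v i = 0 :=
  max_eq_left ((min_le_right _ _).trans hi)

theorem clamp_le (B : ℝ) {v : ι → ℝ} (hv : 0 ≤ v) : clamp B v ≤ v :=
  fun i => max_le (hv i) (min_le_right _ _)

theorem clamp_eq_self {B : ℝ} {v : ι → ℝ} (hv : 0 ≤ v) (hB : ∀ i, v i ≤ B) : clamp B v = v :=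
  funext fun i => by rw [clamp, min_eq_right (hB i)]; exact max_eq_right (hv i)

end Clamp

namespace ChainSystem

variable {K : ℕ} {γ : ℕ → ℝ}

/-- The state `v : Fin (K + 2) → ℝ` holds `x_k` at index `k`. Index `1` is a dummy slot kept
constant, and `coord s v j` reads `x_j` with the convention `x₁ := s`, the current forcing. -/
def coord (s : ℝ) (v : Fin (K + 2) → ℝ) (j : ℕ) : ℝ :=
  if j = 1 then s else if h : j < K + 2 then v ⟨j, h⟩ else 0

def field (K : ℕ) (γ : ℕ → ℝ) (s : ℝ) (v : Fin (K + 2) → ℝ) (k : Fin (K + 2)) : ℝ :=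
  if (k : ℕ) = 1 then 0
  else if (k : ℕ) = 0 ∨ (k : ℕ) = K + 1 then coord s v K
  else coord s v (k - 1) + (γ k - v 0) * v k

theorem contDiff_coord (j : ℕ) :
    ContDiff ℝ 1 fun p : ℝ × (Fin (K + 2) → ℝ) => coord p.1 p.2 j := by
  unfold coord
  split_ifs <;> fun_prop

theorem contDiff_field (K : ℕ) (γ : ℕ → ℝ) : ContDiff ℝ 1 (Function.uncurry (field K γ)) := by
  refine contDiff_pi.2 fun k => ?_
  simp only [Function.uncurry_def, field]
  split_ifs
  · exact contDiff_const
  · exact contDiff_coord K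
  · exact (contDiff_coord _).add ((contDiff_const.sub (by fun_prop)).mul (by fun_prop))

theorem exists_lipschitzOnWith_field {y : ℝ → ℝ} (hy : Continuous y) (K : ℕ) (γ : ℕ → ℝ)
    (T R : ℝ) : ∃ L, ∀ t ∈ Ico 0 T, LipschitzOnWith L (field K γ (y t)) (closedBall 0 R) := by
  obtain ⟨Y, hY⟩ := (isCompact_Icc (a := 0) (b := T)).exists_bound_of_continuousOn hy.continuousOn
  obtain ⟨L, hL⟩ := exists_lipschitzOnWith_of_contDiff_uncurry (contDiff_field K γ) (max Y R)
  exact ⟨L, fun t ht => (hL _ ((hY t (Ico_subset_Icc_self ht)).trans (le_max_left _ _))).mono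
    (closedBall_subset_closedBall (le_max_right _ _))⟩

theorem coord_nonneg {s : ℝ} (hs : 0 ≤ s) {v : Fin (K + 2) → ℝ} (hv : 0 ≤ v) (j : ℕ) :
    0 ≤ coord s v j := by
  unfold coord
  split_ifs
  exacts [hs, hv _, le_rfl]

theorem coord_le {s : ℝ} (hs : 0 ≤ s) {v : Fin (K + 2) → ℝ} (hv : 0 ≤ v) (j : ℕ) :
    coord s v j ≤ s + ∑ i, v i := by
  have hsum : 0 ≤ ∑ i, v i := Finset.sum_nonneg fun i _ => hv i
  unfold coord
  split_ifs with h1 h2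
  · linarith
  · linarith [Finset.single_le_sum (fun i _ => hv i) (Finset.mem_univ ⟨j, h2⟩)]
  · linarith

theorem field_apply_nonneg {s : ℝ} (hs : 0 ≤ s) {v : Fin (K + 2) → ℝ} (hv : 0 ≤ v)
    {k : Fin (K + 2)} (hk : v k = 0) : 0 ≤ field K γ s v k := by
  unfold field
  split_ifs
  · exact le_rfl
  · exact coord_nonneg hs hv K
  · rw [hk, mul_zero, add_zero]
    exact coord_nonneg hs hv _

theorem field_apply_le {s : ℝ} (hs : 0 ≤ s) {v : Fin (K + 2) → ℝ} (hv : 0 ≤ v) {G : ℝ}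
    (hG0 : 0 ≤ G) (hG : ∀ k : Fin (K + 2), γ k ≤ G) (k : Fin (K + 2)) :
    field K γ s v k ≤ s + (1 + G) * ∑ i, v i := by
  have hsum : 0 ≤ ∑ i, v i := Finset.sum_nonneg fun i _ => hv i
  have hprod : (γ k - v 0) * v k ≤ G * ∑ i, v i := calc
    (γ k - v 0) * v k ≤ G * v k := by
      have hv0 : 0 ≤ v 0 := hv 0
      exact mul_le_mul_of_nonneg_right (by linarith [hG k]) (hv k)
    _ ≤ G * ∑ i, v i := by gcongr; exact Finset.single_le_sum (fun i _ => hv i) (Finset.mem_univ k)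
  unfold field
  split_ifs
  · nlinarith
  · nlinarith [coord_le hs hv K]
  · nlinarith [coord_le hs hv (k - 1)]

theorem exists_forall_Icc_hasDerivWithinAt_field_clamp {y : ℝ → ℝ} (hy : Continuous y)
    {T : ℝ} (hT : 0 ≤ T) {B : ℝ} (hB : 0 ≤ B) (a : Fin (K + 2) → ℝ) :
    ∃ u : ℝ → Fin (K + 2) → ℝ, u 0 = a ∧ ∀ t ∈ Icc 0 T,
      HasDerivWithinAt u (field K γ (y t) (clamp B (u t))) (Icc 0 T) t := by
  obtain ⟨Y, hY⟩ := (isCompact_Icc (a := 0) (b := T)).exists_bound_of_continuousOn hy.continuousOn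
  obtain ⟨L, hL⟩ := exists_lipschitzOnWith_of_contDiff_uncurry (contDiff_field K γ) (max Y B)
  obtain ⟨M, hM⟩ := (isCompact_closedBall (0 : ℝ × (Fin (K + 2) → ℝ)) (max Y B)
    ).exists_bound_of_continuousOn (contDiff_field K γ).continuous.continuousOn
  have hclamp : ∀ v, clamp B v ∈ closedBall (0 : Fin (K + 2) → ℝ) (max Y B) := fun v =>
    mem_closedBall_zero_iff.2 ((norm_clamp_le hB v).trans (le_max_right _ _))
  have hyY : ∀ t ∈ Icc 0 T, ‖y t‖ ≤ max Y B := fun t ht => (hY t ht).trans (le_max_left _ _)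
  refine exists_forall_Icc_hasDerivWithinAt_of_lipschitzWith hT
    (g := fun t v => field K γ (y t) (clamp B v)) (L := L * 1) (M := M.toNNReal)
    (fun t ht => ?_) (fun v => ?_) (fun t ht v => ?_) a
  · exact lipschitzOnWith_univ.1 <| (hL _ (hyY t ht)).comp
      (lipschitzWith_clamp B).lipschitzOnWith fun v _ => hclamp v
  · exact ((contDiff_field K γ).continuous.comp
      (hy.prodMk continuous_const)).continuousOn
  · refine (hM (y t, clamp B v) ?_).trans (Real.le_coe_toNNReal M)
    rw [mem_closedBall_zero_iff, Prod.norm_def]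
    exact max_le (hyY t ht) (mem_closedBall_zero_iff.1 (hclamp v))

theorem nonneg_of_hasDerivWithinAt_field_clamp {y : ℝ → ℝ} (hy : ∀ t ≥ 0, 0 ≤ y t)
    {B T : ℝ} {u : ℝ → Fin (K + 2) → ℝ}
    (hu : ∀ t ∈ Icc 0 T, HasDerivWithinAt u (field K γ (y t) (clamp B (u t))) (Icc 0 T) t)
    (h0 : 0 ≤ u 0) : ∀ t ∈ Icc 0 T, 0 ≤ u t := fun t ht k =>
  nonneg_of_hasDerivAt_nonneg_of_neg (u := fun s => u s k)
    ((continuous_apply k).comp_continuousOn fun s hs => (hu s hs).continuousWithinAt)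
    (fun s hs => (hasDerivWithinAt_pi.1 (hu s (Ioo_subset_Icc_self hs)) k).hasDerivAt
      (Icc_mem_nhds hs.1 hs.2)) (h0 k)
    (fun s hs hneg => field_apply_nonneg (hy s hs.1.le) (clamp_nonneg B _)
      (clamp_apply_eq_zero B hneg.le)) t ht

theorem sum_le_gronwallBound_of_hasDerivWithinAt_field_clamp {y : ℝ → ℝ}
    (hy : ∀ t ≥ 0, 0 ≤ y t) {Y G B T : ℝ} (hY : ∀ t ∈ Icc 0 T, y t ≤ Y) (hG0 : 0 ≤ G)
    (hG : ∀ k : Fin (K + 2), γ k ≤ G) {u : ℝ → Fin (K + 2) → ℝ}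
    (hu : ∀ t ∈ Icc 0 T, HasDerivWithinAt u (field K γ (y t) (clamp B (u t))) (Icc 0 T) t)
    (hnn : ∀ t ∈ Icc 0 T, 0 ≤ u t) :
    ∀ t ∈ Icc 0 T, ∑ k, u t k ≤ gronwallBound (∑ k, u 0 k) ((K + 2) * (1 + G)) ((K + 2) * Y) t := by
  have hcont : ContinuousOn u (Icc 0 T) := fun t ht => (hu t ht).continuousWithinAt
  have hsum' : ∀ t ∈ Ico 0 T, HasDerivWithinAt (fun t => ∑ k, u t k)
      (∑ k, field K γ (y t) (clamp B (u t)) k) (Ici t) t := fun t ht =>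
    HasDerivWithinAt.fun_sum fun k _ => hasDerivWithinAt_pi.1
      ((hu t (Ico_subset_Icc_self ht)).mono_of_mem_nhdsWithin (Icc_mem_nhdsGE_of_mem ht)) k
  have hbound : ∀ t ∈ Ico 0 T, ∑ k, field K γ (y t) (clamp B (u t)) k ≤
      (K + 2) * (1 + G) * ∑ k, u t k + (K + 2) * Y := fun t ht => by
    have ht' := Ico_subset_Icc_self ht
    have hmass : ∑ k, clamp B (u t) k ≤ ∑ k, u t k :=
      Finset.sum_le_sum fun k _ => clamp_le B (hnn t ht') k
    calc ∑ k, field K γ (y t) (clamp B (u t)) k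
        ≤ ∑ _k : Fin (K + 2), (Y + (1 + G) * ∑ k, u t k) := Finset.sum_le_sum fun k _ =>
          (field_apply_le (hy t ht.1) (clamp_nonneg B _) hG0 hG k).trans
            (by gcongr; exact hY t ht')
      _ = (K + 2) * (1 + G) * ∑ k, u t k + (K + 2) * Y := by simp; ring
  simpa using le_gronwallBound_of_liminf_deriv_right_le
    ((continuous_finsetSum _ fun k _ => continuous_apply k).comp_continuousOn hcont)
    (fun t ht r hr => ((hsum' t ht).liminf_right_slope_le hr).mono fun z hz => by
      simpa [slope] using hz) le_rfl hbound

theorem exists_forall_Icc_hasDerivWithinAt_field {y : ℝ → ℝ} (hyc : Continuous y)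
    (hy : ∀ t ≥ 0, 0 ≤ y t) {a : Fin (K + 2) → ℝ} (ha : 0 ≤ a) {T : ℝ} (hT : 0 ≤ T) :
    ∃ u : ℝ → Fin (K + 2) → ℝ, u 0 = a ∧
      ∀ t ∈ Icc 0 T, HasDerivWithinAt u (field K γ (y t) (u t)) (Icc 0 T) t := by
  obtain ⟨Y, hY⟩ := (isCompact_Icc (a := 0) (b := T)).exists_bound_of_continuousOn hyc.continuousOn
  have hyY : ∀ t ∈ Icc 0 T, y t ≤ Y := fun t ht => (le_abs_self _).trans (hY t ht)
  have hY0 : 0 ≤ Y := (hy 0 le_rfl).trans (hyY 0 ⟨le_rfl, hT⟩)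
  set G := ∑ k : Fin (K + 2), |γ k|
  have hG0 : 0 ≤ G := Finset.sum_nonneg fun k _ => abs_nonneg _
  have hG : ∀ k : Fin (K + 2), γ k ≤ G := fun k => (le_abs_self _).trans
    (Finset.single_le_sum (f := fun k : Fin (K + 2) => |γ k|) (fun k _ => abs_nonneg _)
      (Finset.mem_univ k))
  have hδ : 0 ≤ ∑ k, a k := Finset.sum_nonneg fun k _ => ha k
  have hmono := gronwallBound_mono hδ
    (by positivity : (0 : ℝ) ≤ (K + 2) * Y) (by positivity : (0 : ℝ) ≤ (K + 2) * (1 + G))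
  -- the a priori bound on `[0, T]`; truncating the field there does not change the solution
  set B := gronwallBound (∑ k, a k) ((K + 2) * (1 + G)) ((K + 2) * Y) T
  have hB : 0 ≤ B := hδ.trans
    ((gronwallBound_x0 _ _ _).symm.le.trans (hmono hT))
  obtain ⟨u, hu0, hu⟩ := exists_forall_Icc_hasDerivWithinAt_field_clamp (γ := γ) hyc hT hB a
  have hnn := nonneg_of_hasDerivWithinAt_field_clamp hy hu (hu0 ▸ ha)
  have hmass := sum_le_gronwallBound_of_hasDerivWithinAt_field_clamp hy hyY hG0 hG hu hnn
  have hclamp : ∀ t ∈ Icc 0 T, clamp B (u t) = u t := fun t ht =>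
    clamp_eq_self (hnn t ht) fun k => (Finset.single_le_sum (fun i _ => hnn t ht i)
      (Finset.mem_univ k)).trans ((hmass t ht).trans (hu0 ▸ hmono ht.2))
  exact ⟨u, hu0, fun t ht => hclamp t ht ▸ hu t ht⟩

variable {y : ℝ → ℝ} {a : ℕ → ℝ}

theorem field_apply_of_eq {s : ℝ} {v : Fin (K + 2) → ℝ} {X : ℕ → ℝ}
    (hX : ∀ k : Fin (K + 2), (k : ℕ) ≠ 1 → v k = X k) (k : Fin (K + 2)) :
    field K γ s v k = if (k : ℕ) = 1 then 0
      else if (k : ℕ) = 0 ∨ (k : ℕ) = K + 1 then (if K = 1 then s else X K)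
      else (if (k : ℕ) = 2 then s else X (k - 1)) + (γ k - X 0) * X k := by
  have hcoord : ∀ j (hj : j < K + 2), coord s v j = if j = 1 then s else X j := fun j hj => by
    unfold coord
    split_ifs with h
    exacts [rfl, hX ⟨j, hj⟩ h]
  have h2 : (k : ℕ) - 1 = 1 ↔ (k : ℕ) = 2 := ⟨fun h => by omega, fun h => by omega⟩
  unfold field
  rw [hcoord K (by omega), hcoord _ (by omega : (k : ℕ) - 1 < K + 2), hX 0 zero_ne_one]
  by_cases hk1 : (k : ℕ) = 1
  · simp only [hk1, if_true]
  · simp only [hk1, if_false, hX k hk1, h2, Fin.val_zero]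

def toState (K : ℕ) (a : ℕ → ℝ) (x : ℕ → ℝ → ℝ) (t : ℝ) : Fin (K + 2) → ℝ :=
  fun k => if (k : ℕ) = 1 then a 1 else x k t

def ofState (K : ℕ) (a : ℕ → ℝ) (w : ℝ → Fin (K + 2) → ℝ) : ℕ → ℝ → ℝ :=
  fun k t => if h : k < K + 2 then w t ⟨k, h⟩ else a k

theorem _root_.IsSol.toState_zero {x : ℕ → ℝ → ℝ} (hx : IsSol K γ y a x) :
    toState K a x 0 = fun k : Fin (K + 2) => a k :=
  funext fun k => by by_cases hk : (k : ℕ) = 1 <;> simp [toState, hk, hx.1]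

theorem _root_.IsSol.hasDerivWithinAt_toState {x : ℕ → ℝ → ℝ} (hx : IsSol K γ y a x) :
    ∀ t ∈ Ici 0,
      HasDerivWithinAt (toState K a x) (field K γ (y t) (toState K a x t)) (Ici 0) t := by
  obtain ⟨-, h0, hlast, hmid⟩ := hx
  intro t ht
  refine hasDerivWithinAt_pi.2 fun k => ?_
  rw [field_apply_of_eq (v := toState K a x t) (X := fun j => x j t) fun k hk => if_neg hk]
  by_cases hk1 : (k : ℕ) = 1
  · simpa [toState, hk1] using hasDerivWithinAt_const t (Ici 0) (a 1)
  rw [if_neg hk1, show (fun s => toState K a x s k) = x k from funext fun s => if_neg hk1]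
  by_cases hk : (k : ℕ) = 0 ∨ (k : ℕ) = K + 1
  · rw [if_pos hk]
    rcases hk with hk | hk <;> rw [hk]
    exacts [h0 t ht, hlast t ht]
  · rw [if_neg hk]
    exact hmid k (by omega) (by omega) t ht

theorem isSol_ofState (hK : 1 ≤ K) {w : ℝ → Fin (K + 2) → ℝ}
    (hw0 : w 0 = fun k : Fin (K + 2) => a k)
    (hw : ∀ t ∈ Ici 0, HasDerivWithinAt w (field K γ (y t) (w t)) (Ici 0) t) :
    IsSol K γ y a (ofState K a w) := by
  have hcomp : ∀ k (hk : k < K + 2), ∀ t ∈ Ici 0, HasDerivWithinAt (ofState K a w k)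
      (field K γ (y t) (w t) ⟨k, hk⟩) (Ici 0) t := fun k hk t ht =>
    (hasDerivWithinAt_pi.1 (hw t ht) ⟨k, hk⟩).congr (fun s _ => dif_pos hk) (dif_pos hk)
  have hfield (t : ℝ) := field_apply_of_eq (γ := γ) (s := y t) (v := w t)
    (X := fun j => ofState K a w j t) fun j _ => by simp [ofState]
  refine ⟨fun k => ?_, fun t ht => ?_, fun t ht => ?_, fun k h2 hk t ht => ?_⟩
  · by_cases hk : k < K + 2 <;> simp [ofState, hk, hw0]
  · simpa [hfield] using hcomp 0 (by omega) t ht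
  · simpa [hfield, show K ≠ 0 by omega] using hcomp (K + 1) (by omega) t ht
  · simpa [hfield, show k ≠ 1 by omega, show k ≠ 0 by omega, show k ≠ K + 1 by omega]
      using hcomp k (by omega) t ht

end ChainSystem

open ChainSystem

/-- For any continuous nonnegative forcing `y` and nonnegative initial condition `a`,
the ODE `x' = F(y, x)`, `x(0) = a` has a unique solution defined on all of `[0,∞)`
(uniqueness for the relevant components, indexed by `{0} ∪ {2,…,K+1}`). -/
theorem ode_exists_unique (K : ℕ) (hK : 1 ≤ K) (γ : ℕ → ℝ)
    (y : ℝ → ℝ) (hyc : Continuous y) (hy : ∀ t ≥ (0:ℝ), 0 ≤ y t)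
    (a : ℕ → ℝ) (ha : ∀ k, 0 ≤ a k) :
    ∃ x : ℕ → ℝ → ℝ, IsSol K γ y a x ∧
      ∀ x' : ℕ → ℝ → ℝ, IsSol K γ y a x' →
        ∀ k, (k = 0 ∨ (2 ≤ k ∧ k ≤ K + 1)) → ∀ t ≥ (0:ℝ), x' k t = x k t := by
  have hlip := exists_lipschitzOnWith_field hyc K γ
  obtain ⟨w, hw0, hw⟩ := exists_forall_Ici_hasDerivWithinAt hlip fun T hT =>
    exists_forall_Icc_hasDerivWithinAt_field hyc hy (a := fun k : Fin (K + 2) => a k)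
      (fun k => ha k) hT
  refine ⟨ofState K a w, isSol_ofState hK hw0 hw, fun x' hx' k hk t ht => ?_⟩
  have hw' := eqOn_Ici_of_lipschitzOnWith_closedBall hlip hx'.hasDerivWithinAt_toState hw
    (hx'.toState_zero.trans hw0.symm) ht
  have hk' : k < K + 2 := by omega
  simpa [toState, ofState, hk', show k ≠ 1 by omega] using congrFun hw' ⟨k, hk'⟩
end

section
/- Let x = (x₀, x₂, …, x_{K+1}) solve the ODE x'(t) = F(y(t), x(t)) on [0,∞) with nonnegative initial condition and y: [0,∞) → [0,∞) continuous. Then x(t) ∈ [0,∞)^{K+1} for all t ≥ 0; in particular x₀ is non-decreasing and its limit x₀(∞) as t → ∞ exists in [0,∞]. -/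
/-!
The equations for `x₂, …, x_K` are linear in the unknown, `x_k' = f + g x_k` with a nonnegative
source `f` (either `y` or the previous component) and a continuous coefficient `g = γ_k - x₀`.
Multiplying by the integrating factor `exp (-∫ g)` turns such an equation into one with
nonnegative derivative, so nonnegativity propagates from `x₂` up to `x_K`. Then `x₀` and `x_{K+1}`
have the nonnegative derivative `x_K` (or `y` when `K = 1`), hence are non-decreasing, and a
monotone function has a limit in `EReal`.
-/

open Set Filter

open Topology

theorem monotoneOn_Ici_of_hasDerivWithinAt_nonneg {f f' : ℝ → ℝ} {a : ℝ}
    (hf : ∀ t ∈ Ici a, HasDerivWithinAt f (f' t) (Ici a) t)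
    (hf'₀ : ∀ t ∈ Ici a, 0 ≤ f' t) : MonotoneOn f (Ici a) :=
  monotoneOn_of_hasDerivWithinAt_nonneg (convex_Ici a)
    (fun t ht => (hf t ht).continuousWithinAt)
    (fun t ht => (hf t (interior_subset ht)).mono interior_subset)
    (fun t ht => hf'₀ t (interior_subset ht))

theorem nonneg_of_hasDerivWithinAt_linear {u f g : ℝ → ℝ} {a : ℝ} (hg : ContinuousOn g (Ici a))
    (hu : ∀ t ∈ Ici a, HasDerivWithinAt u (f t + g t * u t) (Ici a) t)
    (hf : ∀ t ∈ Ici a, 0 ≤ f t) (hua : 0 ≤ u a) : ∀ t ∈ Ici a, 0 ≤ u t := by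
  -- extend `g` continuously to all of `ℝ` so that it has a primitive there
  set g' : ℝ → ℝ := fun t => g (max a t)
  have hg' : Continuous g' :=
    hg.comp_continuous (continuous_const.max continuous_id) fun t => le_max_left a t
  set G : ℝ → ℝ := fun t => ∫ s in a..t, g' s
  have hG : ∀ t, HasDerivAt G (g' t) t := fun t => (hg'.integral_hasStrictDerivAt a t).hasDerivAt
  set v : ℝ → ℝ := fun t => u t * Real.exp (-G t)
  have hv : ∀ t ∈ Ici a, HasDerivWithinAt v (f t * Real.exp (-G t)) (Ici a) t := by
    intro t ht
    have hg't : g' t = g t := congrArg g (max_eq_right ht)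
    refine ((hu t ht).mul (hG t).hasDerivWithinAt.neg.exp).congr_deriv ?_
    rw [hg't, Pi.neg_apply]
    ring
  have hv_mono : MonotoneOn v (Ici a) :=
    monotoneOn_Ici_of_hasDerivWithinAt_nonneg hv fun t ht =>
      mul_nonneg (hf t ht) (Real.exp_pos _).le
  intro t ht
  have hva : 0 ≤ v a := mul_nonneg hua (Real.exp_pos _).le
  exact nonneg_of_mul_nonneg_left (hva.trans (hv_mono self_mem_Ici ht ht)) (Real.exp_pos _)

theorem MonotoneOn.tendsto_atTop_iSup_max {α β : Type*} [LinearOrder α] [CompleteLinearOrder β]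
    [TopologicalSpace β] [OrderTopology β] {f : α → β} {a : α} (hf : MonotoneOn f (Ici a)) :
    Tendsto f atTop (𝓝 (⨆ t, f (max a t))) := by
  have hmono : Monotone fun t => f (max a t) := fun s t hst =>
    hf (le_max_left a s) (le_max_left a t) (max_le_max le_rfl hst)
  refine (tendsto_atTop_iSup hmono).congr' ?_
  filter_upwards [eventually_ge_atTop a] with t ht
  rw [max_eq_right ht]

namespace IsSol

variable {K : ℕ} {γ : ℕ → ℝ} {y : ℝ → ℝ} {a : ℕ → ℝ} {x : ℕ → ℝ → ℝ}

theorem nonneg_of_two_le_of_le (hx : IsSol K γ y a x) (hy : ∀ t ≥ (0:ℝ), 0 ≤ y t)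
    (ha : ∀ k, 0 ≤ a k) {k : ℕ} (h2 : 2 ≤ k) : k ≤ K → ∀ t ≥ (0:ℝ), 0 ≤ x k t := by
  obtain ⟨hinit, hx₀, -, hxk⟩ := hx
  have hx₀c : ContinuousOn (x 0) (Ici 0) := fun t ht => (hx₀ t ht).continuousWithinAt
  induction k, h2 using Nat.le_induction with
  | base =>
    intro hK
    refine nonneg_of_hasDerivWithinAt_linear (continuousOn_const.sub hx₀c)
      (hxk 2 le_rfl hK) (fun t ht => ?_) (hinit 2 ▸ ha 2)
    rw [if_pos rfl]
    exact hy t ht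
  | succ k h2 ih =>
    intro hK
    refine nonneg_of_hasDerivWithinAt_linear (continuousOn_const.sub hx₀c)
      (hxk (k + 1) (by omega) hK) (fun t ht => ?_) (hinit (k + 1) ▸ ha (k + 1))
    rw [if_neg (by omega), Nat.add_sub_cancel]
    exact ih (by omega) t ht

theorem forcing_nonneg (hx : IsSol K γ y a x) (hK : 1 ≤ K) (hy : ∀ t ≥ (0:ℝ), 0 ≤ y t)
    (ha : ∀ k, 0 ≤ a k) : ∀ t ∈ Ici (0:ℝ), 0 ≤ if K = 1 then y t else x K t := by
  intro t ht
  split_ifs with hK1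
  · exact hy t ht
  · exact hx.nonneg_of_two_le_of_le hy ha (by omega) le_rfl t ht

theorem monotoneOn_zero (hx : IsSol K γ y a x) (hK : 1 ≤ K) (hy : ∀ t ≥ (0:ℝ), 0 ≤ y t)
    (ha : ∀ k, 0 ≤ a k) : MonotoneOn (x 0) (Ici 0) :=
  monotoneOn_Ici_of_hasDerivWithinAt_nonneg hx.2.1 (hx.forcing_nonneg hK hy ha)

theorem monotoneOn_last (hx : IsSol K γ y a x) (hK : 1 ≤ K) (hy : ∀ t ≥ (0:ℝ), 0 ≤ y t)
    (ha : ∀ k, 0 ≤ a k) : MonotoneOn (x (K + 1)) (Ici 0) :=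
  monotoneOn_Ici_of_hasDerivWithinAt_nonneg hx.2.2.1 (hx.forcing_nonneg hK hy ha)

theorem nonneg_of_monotoneOn (hx : IsSol K γ y a x) (ha : ∀ k, 0 ≤ a k) {k : ℕ}
    (hk : MonotoneOn (x k) (Ici 0)) : ∀ t ≥ (0:ℝ), 0 ≤ x k t := fun _ ht =>
  (hx.1 k ▸ ha k).trans (hk self_mem_Ici ht ht)

end IsSol

theorem ode_nonneg_general (K : ℕ) (hK : 1 ≤ K) (γ : ℕ → ℝ)
    (y : ℝ → ℝ) (hy : ∀ t ≥ (0:ℝ), 0 ≤ y t)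
    (a : ℕ → ℝ) (ha : ∀ k, 0 ≤ a k)
    (x : ℕ → ℝ → ℝ) (hx : IsSol K γ y a x) :
    (∀ k, (k = 0 ∨ (2 ≤ k ∧ k ≤ K + 1)) → ∀ t ≥ (0:ℝ), 0 ≤ x k t) ∧
    MonotoneOn (x 0) (Ici (0:ℝ)) ∧
    ∃ L : EReal, Tendsto (fun t => ((x 0 t : ℝ) : EReal)) atTop (nhds L) ∧ 0 ≤ L := by
  have hmono₀ := hx.monotoneOn_zero hK hy ha
  have hnonneg₀ := hx.nonneg_of_monotoneOn ha hmono₀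
  refine ⟨?_, hmono₀, ?_⟩
  · rintro k (rfl | ⟨h2, hk⟩)
    · exact hnonneg₀
    · rcases hk.lt_or_eq with hk | rfl
      · exact hx.nonneg_of_two_le_of_le hy ha h2 (by omega)
      · exact hx.nonneg_of_monotoneOn ha (hx.monotoneOn_last hK hy ha)
  · have hmono : MonotoneOn (fun t => ((x 0 t : ℝ) : EReal)) (Ici 0) :=
      EReal.coe_strictMono.monotone.comp_monotoneOn hmono₀
    refine ⟨_, hmono.tendsto_atTop_iSup_max, le_iSup_of_le 0 ?_⟩
    exact EReal.coe_nonneg.2 (hnonneg₀ _ (le_max_left 0 0))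

/-- If `x` solves the ODE with nonnegative initial condition and continuous
nonnegative forcing `y`, then `x(t) ∈ [0,∞)^{K+1}` for all `t ≥ 0`; in particular
`x₀` is non-decreasing on `[0,∞)` and its limit as `t → ∞` exists in `[0,∞]`. -/
theorem ode_nonneg (K : ℕ) (hK : 1 ≤ K) (γ : ℕ → ℝ)
    (y : ℝ → ℝ) (hyc : Continuous y) (hy : ∀ t ≥ (0:ℝ), 0 ≤ y t)
    (a : ℕ → ℝ) (ha : ∀ k, 0 ≤ a k)
    (x : ℕ → ℝ → ℝ) (hx : IsSol K γ y a x) :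
    (∀ k, (k = 0 ∨ (2 ≤ k ∧ k ≤ K + 1)) → ∀ t ≥ (0:ℝ), 0 ≤ x k t) ∧
    MonotoneOn (x 0) (Ici (0:ℝ)) ∧
    ∃ L : EReal, Tendsto (fun t => ((x 0 t : ℝ) : EReal)) atTop (nhds L) ∧ 0 ≤ L :=
  ode_nonneg_general K hK γ y hy a ha x hx
end

section
/- Let x solve x'(t) = F(0, x(t)) with nonnegative initial condition, assume x₀(∞) is finite with x₀(∞) > γ_k, and suppose φ(t) e^{-∫₀^t (x₀ - γ_{k-1})} → 0 as t → ∞ for some continuous nonnegative function φ. Then ψ(t) := (∫₀^t φ(u) e^{(γ_{k-1} - γ_k) u} du) · e^{-∫₀^t (x₀ - γ_k)} also tends to 0 as t → ∞. -/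
/-!
Put `G t = ∫₀ᵗ (x₀ - γ_k)`. Then `φ(u) e^{(γ_{k-1} - γ_k) u} = h(u) e^{G u}` with
`h(u) = φ(u) e^{-∫₀ᵘ (x₀ - γ_{k-1})} → 0`, and `G' = x₀ - γ_k ≥ κ > 0` eventually.
Where `G' ≥ κ` on `[T, t]`, the fundamental theorem of calculus gives `κ ∫_T^t e^G ≤ e^{G t}`,
so a function that is `o(e^G)` has a primitive that is `o(e^G)`: the tail `∫_T^t` is small by
that bound, and the head `∫₀^T` is a constant while `e^{G t} → ∞`.
-/

open Set Filter intervalIntegral MeasureTheory Asymptotics Real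

section

variable {G a : ℝ → ℝ} {κ T t : ℝ}

theorem mul_sub_le_sub_of_le_hasDerivAt (hG : ∀ u ≥ T, HasDerivAt G (a u) u)
    (hκ : ∀ u ≥ T, κ ≤ a u) (hTt : T ≤ t) : κ * (t - T) ≤ G t - G T := by
  refine (convex_Ici T).mul_sub_le_image_sub_of_le_deriv
    (fun u hu => (hG u hu).continuousAt.continuousWithinAt) (fun u hu => ?_) (fun u hu => ?_)
    T self_mem_Ici t hTt hTt
  · rw [interior_Ici] at hu
    exact (hG u (le_of_lt hu)).differentiableAt.differentiableWithinAt
  · rw [interior_Ici] at hu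
    rw [(hG u (le_of_lt hu)).deriv]
    exact hκ u (le_of_lt hu)

theorem tendsto_atTop_of_le_hasDerivAt (hκ0 : 0 < κ)
    (h : ∀ᶠ u in atTop, HasDerivAt G (a u) u ∧ κ ≤ a u) : Tendsto G atTop atTop := by
  obtain ⟨T, hT⟩ := eventually_atTop.mp h
  have hlin : Tendsto (fun t => G T + κ * (t - T)) atTop atTop :=
    tendsto_atTop_add_const_left _ _
      ((tendsto_atTop_add_const_right _ _ tendsto_id).const_mul_atTop hκ0)
  refine tendsto_atTop_mono' _ ((eventually_ge_atTop T).mono fun t ht => ?_) hlin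
  linarith [mul_sub_le_sub_of_le_hasDerivAt (fun u hu => (hT u hu).1) (fun u hu => (hT u hu).2) ht]

theorem mul_integral_exp_le_exp (hTt : T ≤ t) (hG : ∀ u ∈ Icc T t, HasDerivAt G (a u) u)
    (hκ : ∀ u ∈ Icc T t, κ ≤ a u) : κ * ∫ u in T..t, exp (G u) ≤ exp (G t) := by
  have hcont : ContinuousOn (fun u => exp (G u)) (Icc T t) := fun u hu =>
    (hG u hu).continuousAt.continuousWithinAt.rexp
  have key : ∫ u in T..t, κ * exp (G u) ≤ exp (G t) - exp (G T) :=
    integral_le_sub_of_hasDeriv_right_of_le hTt hcont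
      (fun u hu => ((hG u (Ioo_subset_Icc_self hu)).exp).hasDerivWithinAt)
      ((hcont.const_smul κ).integrableOn_Icc)
      (fun u hu => by
        rw [mul_comm κ]
        exact mul_le_mul_of_nonneg_left (hκ u (Ioo_subset_Icc_self hu)) (exp_pos _).le)
  rw [intervalIntegral.integral_const_mul] at key
  linarith [exp_pos (G T)]

variable {E : Type*} [NormedAddCommGroup E] [NormedSpace ℝ E] {f : ℝ → E}

theorem norm_integral_le_of_norm_le_mul_exp (hκ0 : 0 < κ) (hTt : T ≤ t)
    (hG : ∀ u ∈ Icc T t, HasDerivAt G (a u) u) (hκ : ∀ u ∈ Icc T t, κ ≤ a u) {c : ℝ}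
    (hf : ∀ u ∈ Icc T t, ‖f u‖ ≤ c * exp (G u)) :
    ‖∫ u in T..t, f u‖ ≤ c / κ * exp (G t) := by
  have hc : 0 ≤ c :=
    nonneg_of_mul_nonneg_left ((norm_nonneg _).trans (hf T (left_mem_Icc.2 hTt))) (exp_pos _)
  have hcont : ContinuousOn (fun u => c * exp (G u)) (uIcc T t) := by
    rw [uIcc_of_le hTt]
    exact fun u hu => ((hG u hu).continuousAt.continuousWithinAt.rexp).const_smul c
  calc ‖∫ u in T..t, f u‖ ≤ ∫ u in T..t, c * exp (G u) :=
        norm_integral_le_of_norm_le hTt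
          (ae_of_all _ fun u hu => hf u (Ioc_subset_Icc_self hu)) hcont.intervalIntegrable
    _ = c / κ * (κ * ∫ u in T..t, exp (G u)) := by
        rw [intervalIntegral.integral_const_mul]; field_simp
    _ ≤ c / κ * exp (G t) :=
        mul_le_mul_of_nonneg_left (mul_integral_exp_le_exp hTt hG hκ) (by positivity)

theorem isLittleO_integral_of_isLittleO_exp (hκ0 : 0 < κ)
    (hG : ∀ᶠ u in atTop, HasDerivAt G (a u) u ∧ κ ≤ a u) {b : ℝ}
    (hf : ∀ t, IntervalIntegrable f volume b t) (hfG : f =o[atTop] fun u => exp (G u)) :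
    (fun t => ∫ u in b..t, f u) =o[atTop] fun t => exp (G t) := by
  have hexp : Tendsto (norm ∘ fun t => exp (G t)) atTop atTop := by
    simpa [Function.comp_def, abs_exp] using
      tendsto_exp_atTop.comp (tendsto_atTop_of_le_hasDerivAt hκ0 hG)
  refine IsLittleO.of_bound fun ε hε => ?_
  obtain ⟨T, hT⟩ := eventually_atTop.mp (hG.and (hfG.bound (by positivity : 0 < ε / 2 * κ)))
  have hhead : (fun _ => ∫ u in b..T, f u) =o[atTop] fun t => exp (G t) :=
    isLittleO_const_left.2 (Or.inr hexp)
  filter_upwards [hhead.bound (half_pos hε), eventually_ge_atTop T] with t hhead htT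
  have htail : ‖∫ u in T..t, f u‖ ≤ ε / 2 * ‖exp (G t)‖ := by
    simpa [abs_exp, mul_div_cancel_right₀ _ hκ0.ne'] using
      norm_integral_le_of_norm_le_mul_exp hκ0 htT (fun u hu => (hT u hu.1).1.1)
        (fun u hu => (hT u hu.1).1.2) (c := ε / 2 * κ)
        (fun u hu => by simpa [abs_exp] using (hT u hu.1).2)
  rw [← integral_add_adjacent_intervals (hf T) ((hf T).symm.trans (hf t))]
  calc ‖(∫ u in b..T, f u) + ∫ u in T..t, f u‖
      ≤ ‖∫ u in b..T, f u‖ + ‖∫ u in T..t, f u‖ := norm_add_le _ _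
    _ ≤ ε / 2 * ‖exp (G t)‖ + ε / 2 * ‖exp (G t)‖ := add_le_add hhead htail
    _ = ε * ‖exp (G t)‖ := by ring

end

theorem aux_limit_zero_general (x0 : ℝ → ℝ) (γk γkm : ℝ) (L : ℝ)
    (hcont : ContinuousOn x0 (Ici (0:ℝ)))
    (hlim : Tendsto x0 atTop (nhds L)) (hL : γk < L)
    (φ : ℝ → ℝ) (hφc : Continuous φ)
    (hφ : Tendsto
      (fun t => φ t * Real.exp (-∫ u in (0:ℝ)..t, (x0 u - γkm))) atTop (nhds 0)) :
    Tendsto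
      (fun t => (∫ u in (0:ℝ)..t, φ u * Real.exp ((γkm - γk) * u)) *
        Real.exp (-∫ u in (0:ℝ)..t, (x0 u - γk))) atTop (nhds 0) := by
  set G : ℝ → ℝ := fun t => ∫ u in (0:ℝ)..t, (x0 u - γk) with hG_def
  have hint : ∀ t ≥ 0, IntervalIntegrable x0 volume 0 t := fun t ht =>
    (hcont.mono (by simp [uIcc_of_le ht, Icc_subset_Ici_self])).intervalIntegrable
  have hderiv : ∀ u > 0, HasDerivAt G (x0 u - γk) u := fun u hu =>
    integral_hasDerivAt_right ((hint u hu.le).sub intervalIntegrable_const)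
      (((hcont.mono Ioi_subset_Ici_self).sub continuousOn_const).stronglyMeasurableAtFilter
        isOpen_Ioi u hu)
      ((hcont.continuousAt (Ici_mem_nhds hu)).sub continuousAt_const)
  have hgrowth : ∀ᶠ u in atTop, HasDerivAt G (x0 u - γk) u ∧ (L - γk) / 2 ≤ x0 u - γk :=
    ((eventually_gt_atTop 0).mono hderiv).and
      ((hlim.eventually_const_le (by linarith : γk + (L - γk) / 2 < L)).mono fun u hu => by linarith)
  have hfactor : ∀ u ≥ 0, φ u * exp ((γkm - γk) * u) =
      φ u * exp (-∫ v in (0:ℝ)..u, (x0 v - γkm)) * exp (G u) := fun u hu => by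
    simp only [hG_def, mul_assoc, ← exp_add, integral_sub (hint u hu) intervalIntegrable_const,
      intervalIntegral.integral_const, smul_eq_mul, sub_zero]
    ring_nf
  have hsmall : (fun u => φ u * exp ((γkm - γk) * u)) =o[atTop] fun u => exp (G u) :=
    (((isLittleO_one_iff ℝ).2 hφ).mul_isBigO (isBigO_refl _ _)).congr'
      ((eventually_ge_atTop 0).mono fun u hu => (hfactor u hu).symm) (by simp)
  simpa [div_eq_mul_inv, ← exp_neg] using
    (isLittleO_integral_of_isLittleO_exp (by linarith : 0 < (L - γk) / 2) hgrowth
      (fun t => (by fun_prop : Continuous _).intervalIntegrable 0 t) hsmall).tendsto_div_nhds_zero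

/-- If `x₀` is non-decreasing on `[0,∞)` with finite limit `L > γ_k`, and a
continuous nonnegative `φ` satisfies `φ(t) e^{-∫₀ᵗ (x₀ - γ_{k-1})} → 0`, then
`ψ(t) = (∫₀ᵗ φ(u) e^{(γ_{k-1} - γ_k)u} du) e^{-∫₀ᵗ (x₀ - γ_k)} → 0` as `t → ∞`. -/
theorem aux_limit_zero (x0 : ℝ → ℝ) (γk γkm : ℝ) (L : ℝ)
    (hmono : MonotoneOn x0 (Ici (0:ℝ))) (hx0 : ∀ t ≥ (0:ℝ), 0 ≤ x0 t)
    (hcont : ContinuousOn x0 (Ici (0:ℝ)))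
    (hlim : Tendsto x0 atTop (nhds L)) (hL : γk < L)
    (φ : ℝ → ℝ) (hφc : Continuous φ) (hφnn : ∀ t ≥ (0:ℝ), 0 ≤ φ t)
    (hφ : Tendsto
      (fun t => φ t * Real.exp (-∫ u in (0:ℝ)..t, (x0 u - γkm))) atTop (nhds 0)) :
    Tendsto
      (fun t => (∫ u in (0:ℝ)..t, φ u * Real.exp ((γkm - γk) * u)) *
        Real.exp (-∫ u in (0:ℝ)..t, (x0 u - γk))) atTop (nhds 0) :=
  aux_limit_zero_general x0 γk γkm L hcont hlim hL φ hφc hφ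
end
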